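/- Let θ ∈ (π/2, π), k > 0 and μ > 0. For λ ∈ ℂ \ (-∞, -k²] (principal square root), the equation √μ·sin θ + i√(μ + k²)·cos θ + i√(λ + k²) = 0 holds if and only if λ = μ·cos(2θ) - k²·sin²θ - i·√μ·√(μ + k²)·sin(2θ). In particular, for each μ > 0 there is exactly one such λ, it satisfies Im λ > 0, and as μ → 0⁺ it tends to the real point -k²·sin²θ. -/
import Mathlib


open MeasureTheory Real Set Complex

/-- Principal branch of `λ ↦ √(λ + k²)`. -/
noncomputable def csq (k : ℝ) (z : ℂ) : ℂ := (z + (k : ℂ) ^ 2) ^ ((1 : ℂ) / 2)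

/-- The half-line `(-∞, c]` on the real axis, viewed as a subset of `ℂ`. -/
def slit (c : ℝ) : Set ℂ := {z : ℂ | z.im = 0 ∧ z.re ≤ c}

/-- The root `λ(μ) = μ cos(2θ) - k² sin²θ - i √μ √(μ+k²) sin(2θ)` of the denominator
`D⁺(λ, μ)`. -/
noncomputable def lamRoot (θ k μ : ℝ) : ℂ :=
  ((μ * Real.cos (2 * θ) - k ^ 2 * (Real.sin θ) ^ 2 : ℝ) : ℂ) -
    Complex.I * ((Real.sqrt μ * Real.sqrt (μ + k ^ 2) * Real.sin (2 * θ) : ℝ) : ℂ)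

lemma sq_expand (a b : ℝ) :
    (((-b : ℝ) : ℂ) + ((a : ℝ) : ℂ) * Complex.I) ^ 2 =
      (((b^2 - a^2 : ℝ)) : ℂ) - Complex.I * ((2*a*b : ℝ) : ℂ) := by
  push_cast
  ring_nf
  rw [Complex.I_sq]
  ring

lemma lamRoot_add_sq (θ k μ : ℝ) (hμ : 0 ≤ μ) :
    lamRoot θ k μ + (k:ℂ)^2 =
    (((-(Real.sqrt (μ + k^2) * Real.cos θ) : ℝ) : ℂ) +
      ((Real.sqrt μ * Real.sin θ : ℝ) : ℂ) * Complex.I)^2 := by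
  have hs : Real.sqrt μ ^ 2 = μ := Real.sq_sqrt hμ
  have ht : Real.sqrt (μ + k^2) ^ 2 = μ + k^2 := Real.sq_sqrt (by positivity)
  rw [sq_expand (Real.sqrt μ * Real.sin θ) (Real.sqrt (μ + k^2) * Real.cos θ)]
  have hre : (Real.sqrt (μ + k^2) * Real.cos θ)^2 - (Real.sqrt μ * Real.sin θ)^2
      = μ * Real.cos (2*θ) - k^2 * Real.sin θ ^ 2 + k^2 := by
    rw [mul_pow, mul_pow, hs, ht, Real.cos_two_mul]
    nlinarith [Real.sin_sq_add_cos_sq θ]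
  have him : 2 * (Real.sqrt μ * Real.sin θ) * (Real.sqrt (μ + k^2) * Real.cos θ)
      = Real.sqrt μ * Real.sqrt (μ + k^2) * Real.sin (2*θ) := by
    rw [Real.sin_two_mul]; ring
  rw [hre, him, lamRoot]
  push_cast
  ring

lemma csq_sq (k : ℝ) (z : ℂ) : (csq k z) ^ 2 = z + (k:ℂ)^2 := by
  rw [csq, one_div]
  exact Complex.cpow_ofNat_inv_pow (z + (k:ℂ)^2) 2

/-- Let `θ ∈ (π/2, π)`, `k > 0`, `μ > 0`. For `λ ∈ ℂ \ (-∞, -k²]`,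
`√μ sin θ + i√(μ+k²) cos θ + i√(λ+k²) = 0` iff `λ = μ cos 2θ - k² sin²θ - i√μ√(μ+k²) sin 2θ`.
In particular there is exactly one such `λ`, it has `Im λ > 0`, and as `μ → 0⁺` it tends to
the real point `-k² sin²θ`. -/
theorem denominator_root (θ k : ℝ) (hθ : θ ∈ Set.Ioo (π / 2) π) (hk : 0 < k) :
    (∀ μ : ℝ, 0 < μ → ∀ z ∈ (slit (-k ^ 2))ᶜ,
      (((Real.sqrt μ * Real.sin θ : ℝ) : ℂ) +
        Complex.I * ((Real.sqrt (μ + k ^ 2) * Real.cos θ : ℝ) : ℂ) +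
        Complex.I * csq k z = 0 ↔ z = lamRoot θ k μ)) ∧
    (∀ μ : ℝ, 0 < μ → lamRoot θ k μ ∈ (slit (-k ^ 2))ᶜ ∧ 0 < (lamRoot θ k μ).im) ∧
    (∀ μ : ℝ, 0 < μ → ∃! z : ℂ, z ∈ (slit (-k ^ 2))ᶜ ∧
      ((Real.sqrt μ * Real.sin θ : ℝ) : ℂ) +
        Complex.I * ((Real.sqrt (μ + k ^ 2) * Real.cos θ : ℝ) : ℂ) +
        Complex.I * csq k z = 0) ∧
    Filter.Tendsto (fun μ : ℝ => lamRoot θ k μ) (nhdsWithin 0 (Set.Ioi 0))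
      (nhds ((-(k ^ 2) * (Real.sin θ) ^ 2 : ℝ) : ℂ)) := by
  obtain ⟨hθ1, hθ2⟩ := hθ
  have hπ : 0 < π / 2 := by positivity
  have hsinθ : 0 < Real.sin θ := Real.sin_pos_of_pos_of_lt_pi (lt_trans hπ hθ1) hθ2
  have hcosθ : Real.cos θ < 0 :=
    Real.cos_neg_of_pi_div_two_lt_of_lt hθ1 (by linarith [Real.pi_pos])
  have hsin2 : Real.sin (2 * θ) < 0 := by
    rw [Real.sin_two_mul]
    nlinarith [mul_pos hsinθ (neg_pos.2 hcosθ)]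
  have himpos : ∀ μ : ℝ, 0 < μ → 0 < (lamRoot θ k μ).im := by
    intro μ hμ
    have h1 : 0 < Real.sqrt μ := Real.sqrt_pos.2 hμ
    have h2 : 0 < Real.sqrt (μ + k^2) := Real.sqrt_pos.2 (by positivity)
    have : (lamRoot θ k μ).im = -(Real.sqrt μ * Real.sqrt (μ + k ^ 2) * Real.sin (2 * θ)) := by
      simp [lamRoot, -Complex.ofReal_cos, -Complex.ofReal_sin, ← Complex.ofReal_pow]
    rw [this]
    nlinarith [mul_pos (mul_pos h1 h2) (neg_pos.2 hsin2)]
  have hmem : ∀ μ : ℝ, 0 < μ → lamRoot θ k μ ∈ (slit (-k ^ 2))ᶜ := by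
    intro μ hμ h
    exact absurd h.1 (ne_of_gt (himpos μ hμ))
  have key : ∀ μ : ℝ, 0 < μ → ∀ z ∈ (slit (-k ^ 2))ᶜ,
      (((Real.sqrt μ * Real.sin θ : ℝ) : ℂ) +
        Complex.I * ((Real.sqrt (μ + k ^ 2) * Real.cos θ : ℝ) : ℂ) +
        Complex.I * csq k z = 0 ↔ z = lamRoot θ k μ) := by
    intro μ hμ z hz
    set a : ℝ := Real.sqrt μ * Real.sin θ with ha
    set b : ℝ := Real.sqrt (μ + k ^ 2) * Real.cos θ with hb
    have hapos : 0 < a := mul_pos (Real.sqrt_pos.2 hμ) hsinθ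
    have hbneg : b < 0 := mul_neg_of_pos_of_neg (Real.sqrt_pos.2 (by positivity)) hcosθ
    set w : ℂ := ((-b : ℝ) : ℂ) + ((a : ℝ) : ℂ) * Complex.I with hw
    have hwre : 0 < w.re := by simp [hw]; linarith
    have hL : lamRoot θ k μ + (k:ℂ)^2 = w ^ 2 := lamRoot_add_sq θ k μ hμ.le
    have hcsqL : csq k (lamRoot θ k μ) = w := by
      rw [csq, hL, one_div]
      exact Complex.sq_cpow_two_inv hwre
    constructor
    · intro heq
      have hcz : csq k z = w := by
        have h1 : Complex.I * csq k z = Complex.I * w := by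
          have h2 : Complex.I * csq k z = -(((a:ℝ):ℂ) + Complex.I * ((b:ℝ):ℂ)) := by
            linear_combination heq
          rw [h2, hw]; push_cast; ring_nf; rw [Complex.I_sq]; ring
        exact mul_left_cancel₀ Complex.I_ne_zero h1
      have hzsq : z + (k:ℂ)^2 = w ^ 2 := by rw [← csq_sq k z, hcz]
      have : z + (k:ℂ)^2 = lamRoot θ k μ + (k:ℂ)^2 := by rw [hzsq, hL]
      exact add_right_cancel this
    · intro hzeq
      rw [hzeq, hcsqL, hw]
      push_cast
      ring_nf
      rw [Complex.I_sq]
      ring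
  refine ⟨key, fun μ hμ => ⟨hmem μ hμ, himpos μ hμ⟩, ?_, ?_⟩
  · intro μ hμ
    exact ⟨lamRoot θ k μ, ⟨hmem μ hμ, (key μ hμ _ (hmem μ hμ)).2 rfl⟩,
      fun y hy => (key μ hμ y hy.1).1 hy.2⟩
  · have hc : Continuous fun μ : ℝ => lamRoot θ k μ := by
      unfold lamRoot; fun_prop
    have h0 : lamRoot θ k 0 = ((-(k ^ 2) * (Real.sin θ) ^ 2 : ℝ) : ℂ) := by
      rw [lamRoot, Real.sqrt_zero]
      push_cast
      ring
    have := (hc.tendsto 0).mono_left (nhdsWithin_le_nhds (s := Set.Ioi (0:ℝ)))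
    rwa [h0] at this
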